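/- arXiv:2505.13689 — 2 statements merged into one kernel-verified Lean document; each statement's English description precedes it below -/
import Mathlib

section
/- Let f be a piecewise linear orientation-preserving circle homeomorphism with rational rotation number p/q (in lowest terms). If every break point of f is periodic (necessarily of period q), then f^q is the identity on the circle. -/
open MeasureTheory Filter Set

/-- A lift of an orientation-preserving circle homeomorphism. -/
def IsLift (F : ℝ → ℝ) : Prop :=
  Continuous F ∧ StrictMono F ∧ ∀ x, F (x + 1) = F x + 1

/-- `b` is a break point of `F`: one-sided derivatives exist and differ. -/
def IsBreakPoint (F : ℝ → ℝ) (b : ℝ) : Prop :=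
  ∃ dm dp : ℝ, dm ≠ dp ∧ HasDerivWithinAt F dm (Set.Iic b) b ∧
    HasDerivWithinAt F dp (Set.Ici b) b

/-- `F` is a piecewise linear lift with break point set `B ⊆ [0,1)`:
it is a lift, each point of `B` is a break point, and `F` is affine near any
point not congruent (mod 1) to a break point. -/
def IsPWLLift (F : ℝ → ℝ) (B : Finset ℝ) : Prop :=
  IsLift F ∧ (↑B : Set ℝ) ⊆ Set.Ico (0 : ℝ) 1 ∧
  (∀ b ∈ B, IsBreakPoint F b) ∧
  (∀ x : ℝ, (∀ b ∈ B, ∀ k : ℤ, x ≠ b + k) →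
    ∃ ε > 0, ∃ a c : ℝ, ∀ y, |y - x| < ε → F y = a * y + c)

/-- The rotation number of the lift `F` is `ρ`. -/
def HasRotNum (F : ℝ → ℝ) (ρ : ℝ) : Prop :=
  ∀ x : ℝ, Filter.Tendsto (fun m : ℕ => (F^[m] x - x) / m) Filter.atTop (nhds ρ)

/-- `b` and `b'` lie on the same orbit of the circle map induced by the lift `F`. -/
def SameOrbit (F : ℝ → ℝ) (b b' : ℝ) : Prop :=
  ∃ j : ℕ, ∃ m : ℤ, F^[j] b = b' + m ∨ F^[j] b' = b + m

/-! Since the rotation number is `p/q`, the closed, `ℤ`-periodic set `T = {x | F^q x = x + p}` is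
nonempty. Every break point lies in `T` and `T` is invariant under `F`, so for `z ∉ T` no iterate
`F^j z`, `j < q`, is a break point mod 1, and `F^q` is affine near `z`. Hence `F^q` is affine on
each gap `(u, v)` of `T`; agreeing with `x ↦ x + p` at `u` and `v`, it agrees with it on `[u, v]`,
so there are no gaps and `T = ℝ`. -/

def IsLocallyAffineAt (h : ℝ → ℝ) (x : ℝ) : Prop :=
  ∃ a c : ℝ, h =ᶠ[nhds x] fun y => a * y + c

namespace IsLocallyAffineAt

variable {g h : ℝ → ℝ} {x : ℝ}

theorem differentiableAt (hg : IsLocallyAffineAt g x) : DifferentiableAt ℝ g x := by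
  obtain ⟨a, c, hac⟩ := hg
  exact (by fun_prop : DifferentiableAt ℝ (fun y => a * y + c) x).congr_of_eventuallyEq hac

theorem hasDerivAt_deriv (hg : IsLocallyAffineAt g x) : HasDerivAt (deriv g) 0 x := by
  obtain ⟨a, c, hac⟩ := hg
  refine (hasDerivAt_const x a).congr_of_eventuallyEq ?_
  filter_upwards [hac.eventuallyEq_nhds] with y hy
  rw [hy.deriv_eq]
  simp

theorem comp (hg : IsLocallyAffineAt g x) (hh : IsLocallyAffineAt h (g x)) :
    IsLocallyAffineAt (h ∘ g) x := by
  obtain ⟨a', c', hac'⟩ := hh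
  have hh' := hg.differentiableAt.continuousAt.eventually hac'
  obtain ⟨a, c, hac⟩ := hg
  refine ⟨a' * a, a' * c + c', ?_⟩
  filter_upwards [hac, hh'] with y hy hy'
  rw [Function.comp_apply, hy', hy]
  ring

end IsLocallyAffineAt

theorem isLocallyAffineAt_iterate {F : ℝ → ℝ} {x : ℝ} :
    ∀ {n : ℕ}, (∀ j < n, IsLocallyAffineAt F (F^[j] x)) → IsLocallyAffineAt F^[n] x
  | 0, _ => ⟨1, 0, by simp only [one_mul, add_zero]; rfl⟩
  | n + 1, h => by
    rw [Function.iterate_succ']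
    exact (isLocallyAffineAt_iterate fun j hj => h j (by omega)).comp (h n n.lt_succ_self)

/-- `deriv g` has zero derivative on `(u, v)`, hence is constant there. -/
theorem exists_affine_of_isLocallyAffineAt {g : ℝ → ℝ} {u v : ℝ} (huv : u < v)
    (hcont : ContinuousOn g (Icc u v)) (hloc : ∀ z ∈ Ioo u v, IsLocallyAffineAt g z) :
    ∃ a c : ℝ, ∀ x ∈ Icc u v, g x = a * x + c := by
  obtain ⟨a, ha⟩ := isOpen_Ioo.exists_is_const_of_deriv_eq_zero isPreconnected_Ioo
    (fun z hz => (hloc z hz).hasDerivAt_deriv.differentiableAt.differentiableWithinAt)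
    (fun z hz => (hloc z hz).hasDerivAt_deriv.deriv)
  obtain ⟨c, hc⟩ := isOpen_Ioo.exists_eq_add_of_deriv_eq isPreconnected_Ioo (g := (a * ·))
    (fun z hz => (hloc z hz).differentiableAt.differentiableWithinAt) (by fun_prop)
    (fun z hz => by simp [ha z hz])
  exact ⟨a, c, hc.of_subset_closure hcont (by fun_prop) Ioo_subset_Icc_self
    (closure_Ioo huv.ne).ge⟩

theorem IsClosed.exists_Ioo_subset_compl {T : Set ℝ} (hT : IsClosed T) {x : ℝ} (hx : x ∉ T)
    (hl : (T ∩ Iic x).Nonempty) (hr : (T ∩ Ici x).Nonempty) :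
    ∃ u ∈ T, ∃ v ∈ T, x ∈ Ioo u v ∧ Ioo u v ⊆ Tᶜ := by
  have hlb : BddAbove (T ∩ Iic x) := ⟨x, fun _ hz => hz.2⟩
  have hrb : BddBelow (T ∩ Ici x) := ⟨x, fun _ hz => hz.2⟩
  obtain ⟨huT, hux⟩ := (hT.inter isClosed_Iic).csSup_mem hl hlb
  obtain ⟨hvT, hxv⟩ := (hT.inter isClosed_Ici).csInf_mem hr hrb
  refine ⟨_, huT, _, hvT, ⟨hux.lt_of_ne ?_, hxv.lt_of_ne ?_⟩, fun z hz hzT => ?_⟩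
  · exact fun h => hx (h ▸ huT)
  · exact fun h => hx (h ▸ hvT)
  rcases le_total z x with hzx | hxz
  · exact (le_csSup hlb ⟨hzT, hzx⟩).not_gt hz.1
  · exact (csInf_le hrb ⟨hzT, hxz⟩).not_gt hz.2

theorem eq_add_of_isLocallyAffineAt {g : ℝ → ℝ} (hg : Continuous g)
    (hg_add : ∀ x (n : ℤ), g (x + n) = g x + n) {m : ℝ} (hfix : ∃ t, g t = t + m)
    (hloc : ∀ z, g z ≠ z + m → IsLocallyAffineAt g z) (x : ℝ) : g x = x + m := by
  set T := {y | g y = y + m}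
  have hT : IsClosed T := isClosed_eq hg (by fun_prop)
  have hT_add : ∀ t ∈ T, ∀ n : ℤ, t + n ∈ T := fun t ht n => by
    change g (t + n) = t + n + m
    rw [hg_add, ht]
    ring
  obtain ⟨t, ht⟩ := hfix
  by_contra hx
  obtain ⟨u, huT, v, hvT, ⟨hux, hxv⟩, hgap⟩ := hT.exists_Ioo_subset_compl hx
    ⟨_, hT_add t ht ⌊x - t⌋, by simp only [mem_Iic]; linarith [Int.floor_le (x - t)]⟩
    ⟨_, hT_add t ht ⌈x - t⌉, by simp only [mem_Ici]; linarith [Int.le_ceil (x - t)]⟩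
  obtain ⟨a, c, hac⟩ := exists_affine_of_isLocallyAffineAt (hux.trans hxv) hg.continuousOn
    fun z hz => hloc z (hgap hz)
  have hu : a * u + c = u + m := (hac u ⟨le_rfl, (hux.trans hxv).le⟩).symm.trans huT
  have hv : a * v + c = v + m := (hac v ⟨(hux.trans hxv).le, le_rfl⟩).symm.trans hvT
  have ha : a = 1 := by
    have : (a - 1) * (v - u) = 0 := by linear_combination hv - hu
    exact sub_eq_zero.1 ((mul_eq_zero.1 this).resolve_right (sub_ne_zero.2 (hux.trans hxv).ne'))
  exact hx (by rw [hac x ⟨hux.le, hxv.le⟩]; subst ha; linarith)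

namespace IsLift

variable {F : ℝ → ℝ}

def toCircleDeg1Lift (hF : IsLift F) : CircleDeg1Lift :=
  ⟨⟨F, hF.2.1.monotone⟩, hF.2.2⟩

@[simp]
theorem coe_toCircleDeg1Lift (hF : IsLift F) : ⇑hF.toCircleDeg1Lift = F := rfl

theorem iterate_add_int (hF : IsLift F) (n : ℕ) (x : ℝ) (m : ℤ) :
    F^[n] (x + m) = F^[n] x + m := by
  have := (hF.toCircleDeg1Lift ^ n).map_add_int x m
  rwa [CircleDeg1Lift.coe_pow, coe_toCircleDeg1Lift] at this

theorem iterate_eq_add_of_iterate_iterate (hF : IsLift F) {n j : ℕ} {m : ℤ} {z : ℝ}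
    (h : F^[n] (F^[j] z) = F^[j] z + m) : F^[n] z = z + m :=
  (hF.2.1.iterate j).injective <| by
    rw [← Function.iterate_add_apply, add_comm, Function.iterate_add_apply, h, hF.iterate_add_int]

theorem translationNumber_eq {ρ : ℝ} (hF : IsLift F) (h : HasRotNum F ρ) :
    hF.toCircleDeg1Lift.translationNumber = ρ :=
  tendsto_nhds_unique (by simpa [CircleDeg1Lift.coe_pow] using
    hF.toCircleDeg1Lift.tendsto_translationNumber 0) (h 0)

theorem exists_iterate_eq_add (hF : IsLift F) {p : ℤ} {q : ℕ} (hq : 0 < q)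
    (h : HasRotNum F (p / q)) : ∃ t, F^[q] t = t + p := by
  simpa [CircleDeg1Lift.coe_pow] using
    (hF.toCircleDeg1Lift.translationNumber_eq_rat_iff hF.1 hq).1 (hF.translationNumber_eq h)

end IsLift

theorem IsPWLLift.isLocallyAffineAt_iterate_of_not_periodic {F : ℝ → ℝ} {B : Finset ℝ}
    (hF : IsPWLLift F B) {q : ℕ} {p : ℤ} (hper : ∀ b ∈ B, F^[q] b = b + p) {z : ℝ} (hz : F^[q] z ≠ z + p) :
    IsLocallyAffineAt F^[q] z := by
  obtain ⟨hlift, -, -, haff⟩ := hF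
  refine isLocallyAffineAt_iterate fun j _ => ?_
  obtain ⟨ε, hε, a, c, hac⟩ := haff (F^[j] z) fun b hb k hbk => hz <|
    hlift.iterate_eq_add_of_iterate_iterate (j := j) <| by
      rw [hbk, hlift.iterate_add_int, hper b hb]
      ring
  exact ⟨a, c, Metric.eventually_nhds_iff.2 ⟨ε, hε, fun y hy => hac y (by rwa [← Real.dist_eq])⟩⟩

theorem stmt1_general (F : ℝ → ℝ) (B : Finset ℝ) (p : ℤ) (q : ℕ) (hq : 0 < q)
    (hF : IsPWLLift F B) (hrot : HasRotNum F ((p : ℝ) / q))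
    (hper : ∀ b ∈ B, F^[q] b = b + p) :
    ∀ x, F^[q] x = x + p :=
  eq_add_of_isLocallyAffineAt (hF.1.1.iterate q) (hF.1.iterate_add_int q)
    (hF.1.exists_iterate_eq_add hq hrot) fun _ => hF.isLocallyAffineAt_iterate_of_not_periodic hper

/-- if every break point of a PWL circle homeomorphism with rotation
number `p/q` (in lowest terms) is periodic, then `f^q` is the identity on the circle,
i.e. `F^q(x) = x + p` for all `x`. -/
theorem stmt1 (F : ℝ → ℝ) (B : Finset ℝ) (p : ℤ) (q : ℕ) (hq : 0 < q)
    (hcop : Nat.Coprime p.natAbs q)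
    (hF : IsPWLLift F B) (hrot : HasRotNum F ((p : ℝ) / q))
    (hper : ∀ b ∈ B, F^[q] b = b + p) :
    ∀ x, F^[q] x = x + p :=
  stmt1_general F B p q hq hF hrot hper
end

section
/- Suppose a piecewise linear orientation-preserving circle homeomorphism f has exactly one break point lying on some orbit (that orbit contains no other break point) and f^q equals a rigid rotation (F^q(x) = x + p for a lift F). Then the one-sided derivatives at that break point must be equal, a contradiction; hence no such f exists. Equivalently: a PWL circle homeomorphism conjugate to a rigid rational rotation cannot have a break point whose full orbit contains no other break point. -/
/-!
Follow the orbit of `b` with the chain rule. By hypothesis every orbit point is either a point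
where `F` is affine or an integer translate of `b`, where `F` has the same one-sided derivatives
`dl ≠ dr` as at `b` because `F` commutes with integer translations. Hence the one-sided
derivatives of `F^q` at `b` are `c * dl ^ (s + 1)` and `c * dr ^ (s + 1)`, with `c` the product
of the slopes at the affine orbit points. Since `F^q` is a translation both equal `1`, and as
`dl, dr ≥ 0` for the monotone `F`, this forces `dl = dr`.
-/

open MeasureTheory Filter Set

def HasOneSidedDerivs (f : ℝ → ℝ) (l r x : ℝ) : Prop :=
  HasDerivWithinAt f l (Iic x) x ∧ HasDerivWithinAt f r (Ici x) x

section OneSidedDerivs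

variable {f g : ℝ → ℝ} {l r l' r' x : ℝ}

theorem HasDerivAt.hasOneSidedDerivs {a : ℝ} (h : HasDerivAt f a x) :
    HasOneSidedDerivs f a a x :=
  ⟨h.hasDerivWithinAt, h.hasDerivWithinAt⟩

namespace HasOneSidedDerivs

theorem unique (h : HasOneSidedDerivs f l r x) (h' : HasOneSidedDerivs f l' r' x) :
    l = l' ∧ r = r' :=
  ⟨(uniqueDiffOn_Iic x x self_mem_Iic).eq_deriv _ h.1 h'.1,
    (uniqueDiffOn_Ici x x self_mem_Ici).eq_deriv _ h.2 h'.2⟩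

theorem nonneg (hf : Monotone f) (h : HasOneSidedDerivs f l r x) : 0 ≤ l ∧ 0 ≤ r := by
  refine ⟨h.1.nonneg_of_monotoneOn ?_ (hf.monotoneOn _),
    h.2.nonneg_of_monotoneOn ?_ (hf.monotoneOn _)⟩
  · rw [accPt_principal_iff_nhdsWithin, Iic_sdiff_right]
    infer_instance
  · rw [accPt_principal_iff_nhdsWithin, Ici_sdiff_left]
    infer_instance

/-- Monotonicity of `g` keeps each side on its own side. -/
theorem comp (hg : Monotone g) (hf : HasOneSidedDerivs f l' r' (g x))
    (hgx : HasOneSidedDerivs g l r x) : HasOneSidedDerivs (f ∘ g) (l' * l) (r' * r) x :=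
  ⟨hf.1.comp x hgx.1 fun _ hy ↦ hg hy, hf.2.comp x hgx.2 fun _ hy ↦ hg hy⟩

theorem add_of_map_add {k : ℝ} (hk : ∀ y, f (y + k) = f y + k)
    (h : HasOneSidedDerivs f l r x) : HasOneSidedDerivs f l r (x + k) := by
  have hshift : f = fun y ↦ f (y - k) + k := funext fun y ↦ by rw [← hk, sub_add_cancel]
  have hsub : HasDerivAt (fun y ↦ y - k) 1 (x + k) := (hasDerivAt_id _).sub_const k
  rw [← add_sub_cancel_right x k] at h
  rw [hshift]
  constructor
  · simpa only [mul_one, Function.comp_def] using (h.1.comp (x + k) hsub.hasDerivWithinAt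
      fun y (hy : y ∈ Iic (x + k)) ↦ sub_le_sub_right hy k).add_const k
  · simpa only [mul_one, Function.comp_def] using (h.2.comp (x + k) hsub.hasDerivWithinAt
      fun y (hy : y ∈ Ici (x + k)) ↦ sub_le_sub_right hy k).add_const k

end HasOneSidedDerivs

theorem hasOneSidedDerivs_iterate_succ (hf : Monotone f) {dl dr : ℝ}
    (hx : HasOneSidedDerivs f dl dr x)
    (horbit : ∀ j : ℕ, (∃ a, HasOneSidedDerivs f a a (f^[j] x)) ∨
      HasOneSidedDerivs f dl dr (f^[j] x)) (n : ℕ) :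
    ∃ c : ℝ, ∃ s : ℕ, HasOneSidedDerivs f^[n + 1] (c * dl ^ (s + 1)) (c * dr ^ (s + 1)) x := by
  induction n with
  | zero => exact ⟨1, 0, by simpa using hx⟩
  | succ n ih =>
    obtain ⟨c, s, hn⟩ := ih
    rw [Function.iterate_succ']
    rcases horbit (n + 1) with ⟨a, ha⟩ | hbreak
    · refine ⟨a * c, s, ?_⟩
      simpa only [mul_assoc] using ha.comp (hf.iterate _) hn
    · refine ⟨c, s + 1, ?_⟩
      convert hbreak.comp (hf.iterate _) hn using 1 <;> ring

end OneSidedDerivs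

theorem map_add_int_of_map_add_one {F : ℝ → ℝ} (h : ∀ x, F (x + 1) = F x + 1) (k : ℤ)
    (x : ℝ) : F (x + k) = F x + k := by
  have hper : Function.Periodic (fun y ↦ F y - y) 1 := fun y ↦ by simp [h]
  have := hper.int_mul k x
  simp only [mul_one] at this
  linarith

theorem hasDerivAt_of_eq_affine {F : ℝ → ℝ} {x ε a c : ℝ} (hε : 0 < ε)
    (h : ∀ y, |y - x| < ε → F y = a * y + c) : HasDerivAt F a x := by
  have hline : HasDerivAt (fun y ↦ a * y + c) a x := by
    simpa using ((hasDerivAt_id x).const_mul a).add_const c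
  refine hline.congr_of_eventuallyEq ?_
  filter_upwards [Metric.ball_mem_nhds x hε] with y hy
  exact h y (by simpa [Real.dist_eq] using hy)

theorem IsPWLLift.orbit_smooth_or_break {F : ℝ → ℝ} {B : Finset ℝ} (hF : IsPWLLift F B)
    {b : ℝ} (hb : b ∈ B) (hlone : ∀ b' ∈ B, SameOrbit F b b' → b' = b) {dl dr : ℝ}
    (hd : HasOneSidedDerivs F dl dr b) (j : ℕ) :
    (∃ a, HasOneSidedDerivs F a a (F^[j] b)) ∨ HasOneSidedDerivs F dl dr (F^[j] b) := by
  by_cases hsmooth : ∀ b' ∈ B, ∀ k : ℤ, F^[j] b ≠ b' + k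
  · obtain ⟨ε, hε, a, c, haff⟩ := hF.2.2.2 _ hsmooth
    exact Or.inl ⟨a, (hasDerivAt_of_eq_affine hε haff).hasOneSidedDerivs⟩
  · push Not at hsmooth
    obtain ⟨b', hb', k, hk⟩ := hsmooth
    obtain rfl : b' = b := hlone b' hb' ⟨j, k, Or.inl hk⟩
    rw [hk]
    exact Or.inr (hd.add_of_map_add (map_add_int_of_map_add_one hF.1.2.2 k))

/-- a PWL circle homeomorphism conjugate to a rigid rational rotation
(`F^q(x) = x + p`) cannot have a break point whose full orbit contains no other break
point. -/
theorem stmt4 (F : ℝ → ℝ) (B : Finset ℝ) (p : ℤ) (q : ℕ) (hq : 0 < q)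
    (hF : IsPWLLift F B) (hper : ∀ x, F^[q] x = x + p)
    (b : ℝ) (hb : b ∈ B)
    (hlone : ∀ b' ∈ B, SameOrbit F b b' → b' = b) : False := by
  obtain ⟨dl, dr, hne, hd : HasOneSidedDerivs F dl dr b⟩ := hF.2.2.1 b hb
  have hmono : Monotone F := hF.1.2.1.monotone
  obtain ⟨c, s, hiter⟩ := hasOneSidedDerivs_iterate_succ hmono hd
    (hF.orbit_smooth_or_break hb hlone hd) (q - 1)
  rw [Nat.sub_add_cancel hq] at hiter
  have hrot : HasOneSidedDerivs F^[q] 1 1 b := by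
    rw [funext hper]
    exact ((hasDerivAt_id b).add_const _).hasOneSidedDerivs
  obtain ⟨hl, hr⟩ := hiter.unique hrot
  have hpow : dl ^ (s + 1) = dr ^ (s + 1) :=
    mul_left_cancel₀ (left_ne_zero_of_mul_eq_one hl) (hl.trans hr.symm)
  obtain ⟨hdl, hdr⟩ := hd.nonneg hmono
  exact hne ((pow_left_inj₀ hdl hdr s.succ_ne_zero).mp hpow)
end
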